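/- Left-End Chain Rule: let R be a commutative semiring, a,b,u,x,y identifiers with x ≠ u, op ∈ {+,×}, K₁, K₂ contexts, ρ an environment into R, and B the binding (u := a op b). Then ⟦∂((B::K₂)[y])/∂x⟧_{ρ⟨K₁⟩} = ⟦∂(K₂[y])/∂x⟧_{ρ⟨K₁;B⟩} + ⟦∂(K₂[y])/∂u⟧_{ρ⟨K₁;B⟩} × ⟦∂(op(Leaf a, Leaf b))/∂x⟧_{ρ⟨K₁⟩}. -/
import Mathlib


inductive Exp (I : Type) : Type
  | zero : Exp I
  | one  : Exp I
  | leaf : I → Exp I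
  | add  : Exp I → Exp I → Exp I
  | mul  : Exp I → Exp I → Exp I

def Exp.eval {I R : Type} [CommSemiring R] (ρ : I → R) : Exp I → R
  | .zero => 0
  | .one => 1
  | .leaf i => ρ i
  | .add e₁ e₂ => e₁.eval ρ + e₂.eval ρ
  | .mul e₁ e₂ => e₁.eval ρ * e₂.eval ρ

inductive Op : Type
  | add
  | mul

def Op.node {V : Type} : Op → Exp V → Exp V → Exp V
  | .add, e₁, e₂ => .add e₁ e₂
  | .mul, e₁, e₂ => .mul e₁ e₂

/-- A binding `u := a op b`. -/
structure Binding (V : Type) where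
  u : V
  op : Op
  a : V
  b : V

/-- A context is a list of bindings; the left end is the earliest binding. -/
abbrev Ctx (V : Type) := List (Binding V)

def Ctx.defs {V : Type} (K : Ctx V) : List V := List.map Binding.u K

/-- Filling, processing bindings from the newest (head of the reversed list). -/
def fillAux {V : Type} [DecidableEq V] : List (Binding V) → V → Exp V
  | [], y => .leaf y
  | B :: K, y =>
      if B.u = y then B.op.node (fillAux K B.a) (fillAux K B.b) else fillAux K y

/-- Filling a context with an identifier, processing bindings from the right end. -/
def Ctx.fill {V : Type} [DecidableEq V] (K : Ctx V) (y : V) : Exp V :=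
  fillAux (List.reverse K) y

/-- Extension of an environment by a context: `ρ⟨K⟩(y) = ⟦K[y]⟧_ρ`. -/
def extendEnv {V R : Type} [DecidableEq V] [CommSemiring R] (ρ : V → R) (K : Ctx V) : V → R :=
  fun y => Exp.eval ρ (Ctx.fill K y)

def Exp.deriv {I : Type} [DecidableEq I] (j : I) : Exp I → Exp I
  | .leaf i => if i = j then .one else .zero
  | .zero => .zero
  | .one => .zero
  | .add e₁ e₂ => .add (e₁.deriv j) (e₂.deriv j)
  | .mul e₁ e₂ => .add (.mul (e₁.deriv j) e₂) (.mul e₁ (e₂.deriv j))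

def Exp.subst {V : Type} (σ : V → Exp V) : Exp V → Exp V
  | .zero => .zero
  | .one => .one
  | .leaf i => σ i
  | .add e₁ e₂ => .add (e₁.subst σ) (e₂.subst σ)
  | .mul e₁ e₂ => .mul (e₁.subst σ) (e₂.subst σ)

lemma eval_subst {V R : Type} [CommSemiring R] (τ : V → R) (σ : V → Exp V) (e : Exp V) :
    Exp.eval τ (e.subst σ) = Exp.eval (fun z => Exp.eval τ (σ z)) e := by
  induction e <;> simp [Exp.subst, Exp.eval, *]

lemma fillAux_append {V : Type} [DecidableEq V] (L M : List (Binding V)) (y : V) :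
    fillAux (L ++ M) y = (fillAux L y).subst (fun z => fillAux M z) := by
  induction L generalizing y with
  | nil => simp [fillAux, Exp.subst]
  | cons B L ih =>
    simp only [List.cons_append, fillAux]
    split
    · cases B.op <;> simp [Op.node, Exp.subst, ih]
    · exact ih y

lemma chain_aux {V R : Type} [DecidableEq V] [CommSemiring R] (τ : V → R) (u x : V)
    (hxu : x ≠ u) (s : Exp V) (e : Exp V) :
    Exp.eval τ (Exp.deriv x (e.subst (fun z => if u = z then s else .leaf z)))
      = Exp.eval (fun z => Exp.eval τ (if u = z then s else .leaf z)) (Exp.deriv x e)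
        + Exp.eval (fun z => Exp.eval τ (if u = z then s else .leaf z)) (Exp.deriv u e)
          * Exp.eval τ (Exp.deriv x s) := by
  induction e with
  | zero => simp [Exp.subst, Exp.deriv, Exp.eval]
  | one => simp [Exp.subst, Exp.deriv, Exp.eval]
  | leaf z =>
    by_cases h : u = z
    · subst h
      simp [Exp.subst, Exp.deriv, Exp.eval, (Ne.symm hxu : ¬ u = x)]
    · have h' : ¬ z = u := fun hh => h hh.symm
      simp only [Exp.subst, if_neg h]
      by_cases hz : z = x <;> simp [Exp.deriv, Exp.eval, hz, h', hxu]
  | add e₁ e₂ ih₁ ih₂ =>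
    simp only [Exp.subst, Exp.deriv, Exp.eval, ih₁, ih₂]
    ring
  | mul e₁ e₂ ih₁ ih₂ =>
    simp only [Exp.subst, Exp.deriv, Exp.eval, ih₁, ih₂, eval_subst]
    ring

/-- the Left-End Chain Rule. -/
theorem left_end_chain_rule {V R : Type} [DecidableEq V] [CommSemiring R]
    (a b u x y : V) (op : Op) (K₁ K₂ : Ctx V) (ρ : V → R)
    (hxu : x ≠ u)
    (hu₁ : u ∉ Ctx.defs K₁) (hu₂ : u ∉ Ctx.defs K₂) :
    Exp.eval (extendEnv ρ K₁)
        (Exp.deriv x (Ctx.fill ((⟨u, op, a, b⟩ :: K₂ : List (Binding V)) : Ctx V) y))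
      = Exp.eval (extendEnv ρ ((K₁ ++ [⟨u, op, a, b⟩] : List (Binding V)) : Ctx V))
          (Exp.deriv x (Ctx.fill K₂ y))
        + Exp.eval (extendEnv ρ ((K₁ ++ [⟨u, op, a, b⟩] : List (Binding V)) : Ctx V))
            (Exp.deriv u (Ctx.fill K₂ y))
          * Exp.eval (extendEnv ρ K₁)
              (Exp.deriv x (Op.node op (Exp.leaf a) (Exp.leaf b))) := by
  set s : Exp V := Op.node op (.leaf a) (.leaf b) with hs
  have hfill : Ctx.fill (⟨u, op, a, b⟩ :: K₂) y
      = (Ctx.fill K₂ y).subst (fun z => if u = z then s else .leaf z) := by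
    show fillAux (List.reverse (⟨u, op, a, b⟩ :: K₂)) y = _
    rw [List.reverse_cons, fillAux_append]
    have hσ : (fun z => fillAux [(⟨u, op, a, b⟩ : Binding V)] z)
        = (fun z => if u = z then s else Exp.leaf z) := by
      funext z
      simp [fillAux, hs]
    rw [hσ]
    rfl
  have henv : extendEnv ρ (K₁ ++ [⟨u, op, a, b⟩])
      = fun z => Exp.eval (extendEnv ρ K₁) (if u = z then s else .leaf z) := by
    funext z
    show Exp.eval ρ (fillAux (List.reverse (K₁ ++ [⟨u, op, a, b⟩])) z) = _
    rw [List.reverse_append]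
    simp only [List.reverse_singleton, List.singleton_append, fillAux]
    by_cases h : u = z
    · cases op <;> simp [h, hs, Op.node, Exp.eval, extendEnv, Ctx.fill]
    · simp [h, Exp.eval, extendEnv, Ctx.fill]
  rw [hfill, henv]
  exact chain_aux _ u x hxu s _
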